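/- Let μ = μ_1 ⊗ ⋯ ⊗ μ_d be a product probability measure on ℝ^d (so the coordinates X_1,…,X_d are independent). Let R^1,…,R^R with R^r = ∏_{i=1}^d I^{(i),r} be measurable rectangles (each I^{(i),r} a measurable subset of ℝ) satisfying μ(R^r ∩ R^{r'}) = 0 for r ≠ r' and μ(R^1 ∪ ⋯ ∪ R^R) = 1. For each r, let A^r ⊂ ℕ^d be finite and Ψ^r_α(x) = ∏_{i=1}^d φ^{(i),r}_{α_i}(x_i) with univariate measurable functions satisfying φ^{(i),r}_0 ≡ 1 on I^{(i),r} and ∫_{I^{(i),r}} φ^{(i),r}_a φ^{(i),r}_b dμ_i = δ_{ab} · μ_i(I^{(i),r}) for all relevant a, b. Let G(x) = Σ_{r=1}^R 1_{R^r}(x) Σ_{α∈A^r} y^r_α Ψ^r_α(x), with y^r_0 = 0 if 0 ∉ A^r. For A ⊆ {1,…,d}, let 𝔉_A be the σ-algebra generated by the coordinates (x_i)_{i∈A}, and define J^{(i),r,r'}_{a,a'} = ∫_{I^{(i),r} ∩ I^{(i),r'}} φ^{(i),r}_a φ^{(i),r'}_{a'} dμ_i. Then Var_μ(E[G | 𝔉_A])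 = Σ_{r,r'=1}^R ( Σ_{α∈A^r, α'∈A^{r'}; α_i = α'_i = 0 for all i ∉ A} y^r_α y^{r'}_{α'} ∏_{i∈A} J^{(i),r,r'}_{α_i,α'_i} ) · (∏_{i∉A} μ_i(I^{(i),r})) · (∏_{i∉A} μ_i(I^{(i),r'})) − (Σ_{r=1}^R y^r_0 μ(R^r))². -/

import Mathlib

/-!
Split every tensor product `∏ i, ψᵢ(xᵢ)` into its factors over `S` and over `Sᶜ`. Under the
product measure the coordinates outside `S` are independent of `𝔉_S`, so conditioning on `𝔉_S`
keeps the first factor and replaces each factor `ψᵢ` outside `S` by its mean. For the localized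
basis functions that mean is `δ_{a0} μᵢ(Iᵢ)`, because `φ₀ = 1` on `Iᵢ` and the family is
orthonormal. So `E[G | 𝔉_S]` is again a finite sum of tensor products, now only in the
coordinates of `S`, with the multi-indices that vanish off `S`. Both its mean (which equals the
mean of `G`) and its second moment are then products of one-dimensional integrals, by Fubini.
-/

open MeasureTheory ProbabilityTheory

/-- The σ-algebra on `ℝ^d` generated by the coordinate maps `x ↦ x i`, `i ∈ S`. -/
def coordSigma (d : ℕ) (S : Finset (Fin d)) : MeasurableSpace (Fin d → ℝ) :=
  ⨆ i ∈ S, MeasurableSpace.comap (fun x : Fin d → ℝ => x i) inferInstance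

theorem coordSigma_le (d : ℕ) (S : Finset (Fin d)) : coordSigma d S ≤ MeasurableSpace.pi :=
  iSup₂_le fun i _ => (measurable_pi_apply i).comap_le

open Classical in
theorem Finset.prod_apply_eq_prod_ite_mem {ι : Type*} [Fintype ι] {Ω : ι → Type*}
    (T : Finset ι) (f : ∀ i, Ω i → ℝ) (x : ∀ i, Ω i) :
    ∏ i ∈ T, f i (x i) = ∏ i, (if i ∈ T then f i else 1) (x i) := by
  simp only [ite_apply, Pi.one_apply, Finset.prod_ite_mem, Finset.univ_inter]

namespace MeasureTheory

variable {ι : Type*} [Fintype ι] {Ω : ι → Type*} [∀ i, MeasurableSpace (Ω i)]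
  {μ : ∀ i, Measure (Ω i)}

theorem integrable_finset_prod_apply [∀ i, IsFiniteMeasure (μ i)] (T : Finset ι)
    {f : ∀ i, Ω i → ℝ}
    (hf : ∀ i ∈ T, Integrable (f i) (μ i)) :
    Integrable (fun x => ∏ i ∈ T, f i (x i)) (Measure.pi μ) := by
  classical
  simp_rw [Finset.prod_apply_eq_prod_ite_mem T f]
  refine Integrable.fintype_prod_dep fun i => ?_
  split_ifs with hi
  exacts [hf i hi, integrable_const 1]

theorem integral_finset_prod_apply [∀ i, IsProbabilityMeasure (μ i)] (T : Finset ι)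
    (f : ∀ i, Ω i → ℝ) :
    ∫ x, ∏ i ∈ T, f i (x i) ∂Measure.pi μ = ∏ i ∈ T, ∫ t, f i t ∂μ i := by
  classical
  simp_rw [Finset.prod_apply_eq_prod_ite_mem T f, integral_fintype_prod_eq_prod,
    apply_ite (fun g : Ω _ → ℝ => ∫ t, g t ∂μ _)]
  simp [Finset.prod_ite_mem]

theorem memLp_two_finset_prod_apply [∀ i, IsFiniteMeasure (μ i)] (T : Finset ι)
    {f : ∀ i, Ω i → ℝ}
    (hf : ∀ i ∈ T, MemLp (f i) 2 (μ i)) :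
    MemLp (fun x => ∏ i ∈ T, f i (x i)) 2 (Measure.pi μ) := by
  refine (memLp_two_iff_integrable_sq ?_).2 ?_
  · exact Finset.aestronglyMeasurable_fun_prod T fun i hi =>
      (hf i hi).1.comp_quasiMeasurePreserving (Measure.quasiMeasurePreserving_eval _ i)
  · simp_rw [← Finset.prod_pow]
    exact integrable_finset_prod_apply T fun i hi => (hf i hi).integrable_sq

theorem condExp_prod_apply [∀ i, IsProbabilityMeasure (μ i)] [DecidableEq ι] (S : Finset ι)
    {f : ∀ i, Ω i → ℝ}
    (hf_meas : ∀ i, Measurable (f i)) (hf : ∀ i, Integrable (f i) (μ i)) :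
    (Measure.pi μ)[fun x => ∏ i, f i (x i) |
        ⨆ i ∈ S, MeasurableSpace.comap (fun x : ∀ i, Ω i => x i) inferInstance]
      =ᵐ[Measure.pi μ] fun x => (∏ i ∈ S, f i (x i)) * ∏ i ∈ Sᶜ, ∫ t, f i t ∂μ i := by
  set m : ι → MeasurableSpace (∀ i, Ω i) :=
    fun i => MeasurableSpace.comap (fun x : ∀ i, Ω i => x i) inferInstance
  have hm_le : ∀ i, m i ≤ MeasurableSpace.pi := fun i => (measurable_pi_apply i).comap_le
  have hS_le : ⨆ i ∈ S, m i ≤ MeasurableSpace.pi := iSup₂_le fun i _ => hm_le i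
  have hSc_le : ⨆ i ∈ Sᶜ, m i ≤ MeasurableSpace.pi := iSup₂_le fun i _ => hm_le i
  have hindep : Indep (⨆ i ∈ Sᶜ, m i) (⨆ i ∈ S, m i) (Measure.pi μ) := by
    have h := (iIndepFun_iff_iIndep _ _ _).1
      (iIndepFun_pi (μ := μ) (X := fun _ => id) fun _ => aemeasurable_id)
    simpa using indep_iSup_of_disjoint hm_le h
      (S := ((Sᶜ : Finset ι) : Set ι)) (T := (S : Set ι)) (by simpa using disjoint_compl_left)
  have hcoord : ∀ T : Finset ι, ∀ i ∈ T, Measurable[⨆ i ∈ T, m i] (f i ∘ fun x => x i) :=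
    fun T i hi =>
      (hf_meas i).comp (Measurable.of_comap_le (le_iSup₂ (f := fun i _ => m i) i hi))
  have hsplit : (fun x : ∀ i, Ω i => ∏ i, f i (x i))
      = (fun x => ∏ i ∈ S, f i (x i)) * fun x => ∏ i ∈ Sᶜ, f i (x i) := by
    funext x; exact (Finset.prod_mul_prod_compl S _).symm
  rw [hsplit]
  refine (condExp_mul_of_stronglyMeasurable_left ?_ ?_ ?_).trans ?_
  · exact (Finset.measurable_prod S fun i hi => hcoord S i hi).stronglyMeasurable
  · rw [← hsplit]; exact Integrable.fintype_prod_dep hf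
  · exact integrable_finset_prod_apply _ fun i _ => hf i
  · refine (condExp_indep_eq (f := fun x => ∏ i ∈ Sᶜ, f i (x i)) hSc_le hS_le ?_
      hindep).mono fun x hx => ?_
    · exact (Finset.measurable_prod Sᶜ fun i hi => hcoord Sᶜ i hi).stronglyMeasurable
    · exact congrArg _ (hx.trans (integral_finset_prod_apply _ _))

theorem integral_finset_sum_mul_finset_sum {α κ κ' : Type*} [MeasurableSpace α] {μ : Measure α}
    (s : Finset κ) (t : Finset κ') {F : κ → α → ℝ} {G : κ' → α → ℝ}
    (hF : ∀ k ∈ s, MemLp (F k) 2 μ) (hG : ∀ l ∈ t, MemLp (G l) 2 μ) :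
    ∫ x, (∑ k ∈ s, F k x) * (∑ l ∈ t, G l x) ∂μ
      = ∑ k ∈ s, ∑ l ∈ t, ∫ x, F k x * G l x ∂μ := by
  simp_rw [Finset.sum_mul_sum]
  rw [integral_finsetSum (f := fun k x => ∑ l ∈ t, F k x * G l x) _
    fun k hk => integrable_finsetSum _ fun l hl => (hF k hk).integrable_mul (hG l hl)]
  exact Finset.sum_congr rfl fun k hk =>
    integral_finsetSum _ fun l hl => (hF k hk).integrable_mul (hG l hl)

theorem integrableOn_of_setIntegral_eq_measureReal {α : Type*} [MeasurableSpace α]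
    {μ : Measure α} [IsFiniteMeasure μ] {f : α → ℝ} {s : Set α}
    (h : ∫ x in s, f x ∂μ = μ.real s) : IntegrableOn f s μ := by
  -- otherwise the integral takes the junk value `0`, which forces `μ s = 0`
  by_contra hf
  rw [integral_undef hf, eq_comm, measureReal_eq_zero_iff] at h
  exact hf (.of_measure_zero h)

theorem integral_indicator_mul_indicator {α : Type*} [MeasurableSpace α] {μ : Measure α}
    {s t : Set α} (hs : MeasurableSet s) (ht : MeasurableSet t) (f g : α → ℝ) :
    ∫ x, s.indicator f x * t.indicator g x ∂μ = ∫ x in s ∩ t, f x * g x ∂μ := by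
  simp_rw [← Set.inter_indicator_mul]
  exact integral_indicator (hs.inter ht)

end MeasureTheory

namespace TreePCE

variable {d R : ℕ} {I : Fin R → Fin d → Set ℝ} {φ : Fin R → Fin d → ℕ → ℝ → ℝ}

/-- `φ r i a` extended by zero outside `I r i`, so that `1_{𝓡 r} Ψ r α = ∏ i, localBasis r i (α i)`
on the whole space. -/
noncomputable def localBasis (I : Fin R → Fin d → Set ℝ) (φ : Fin R → Fin d → ℕ → ℝ → ℝ)
    (r : Fin R) (i : Fin d) (a : ℕ) : ℝ → ℝ :=
  (I r i).indicator (φ r i a)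

theorem measurable_localBasis (hImeas : ∀ r i, MeasurableSet (I r i))
    (hφmeas : ∀ r i a, Measurable (φ r i a)) (r : Fin R) (i : Fin d) (a : ℕ) :
    Measurable (localBasis I φ r i a) :=
  (hφmeas r i a).indicator (hImeas r i)

theorem memLp_two_localBasis {ν : Fin d → Measure ℝ} [∀ i, IsFiniteMeasure (ν i)]
    (hImeas : ∀ r i, MeasurableSet (I r i)) (hφmeas : ∀ r i a, Measurable (φ r i a))
    (hφorth : ∀ r i a b, ∫ t in I r i, φ r i a t * φ r i b t ∂(ν i)
      = (if a = b then 1 else 0) * (ν i (I r i)).toReal)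
    (r : Fin R) (i : Fin d) (a : ℕ) :
    MemLp (localBasis I φ r i a) 2 (ν i) := by
  rw [memLp_two_iff_integrable_sq
    (measurable_localBasis hImeas hφmeas r i a).aestronglyMeasurable]
  have hsq : (fun t => localBasis I φ r i a t ^ 2)
      = (I r i).indicator (fun t => φ r i a t ^ 2) := by
    funext t
    by_cases ht : t ∈ I r i <;> simp [localBasis, ht]
  rw [hsq, integrable_indicator_iff (hImeas r i)]
  refine integrableOn_of_setIntegral_eq_measureReal ?_
  simpa [sq, measureReal_def] using hφorth r i a a

theorem integral_localBasis {ν : Fin d → Measure ℝ}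
    (hImeas : ∀ r i, MeasurableSet (I r i)) (hφ0 : ∀ r i, ∀ t ∈ I r i, φ r i 0 t = 1)
    (hφorth : ∀ r i a b, ∫ t in I r i, φ r i a t * φ r i b t ∂(ν i)
      = (if a = b then 1 else 0) * (ν i (I r i)).toReal)
    (r : Fin R) (i : Fin d) (a : ℕ) :
    ∫ t, localBasis I φ r i a t ∂ν i = if a = 0 then (ν i (I r i)).toReal else 0 := by
  rw [localBasis, integral_indicator (hImeas r i),
    setIntegral_congr_fun (hImeas r i) fun t ht => (mul_one (φ r i a t)).symm.trans
      (congrArg _ (hφ0 r i t ht).symm), hφorth]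
  split_ifs <;> simp

variable {𝒜 : Fin R → Finset (Fin d → ℕ)} {y : Fin R → (Fin d → ℕ) → ℝ}

theorem eq_sum_mul_prod_localBasis {G : (Fin d → ℝ) → ℝ}
    (hG : ∀ x, G x = ∑ r, Set.indicator (Set.univ.pi (I r))
      (fun x' => ∑ α ∈ 𝒜 r, y r α * ∏ i, φ r i (α i) (x' i)) x) (x : Fin d → ℝ) :
    G x = ∑ r, ∑ α ∈ 𝒜 r, y r α * ∏ i, localBasis I φ r i (α i) (x i) := by
  rw [hG]
  refine Finset.sum_congr rfl fun r _ => ?_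
  by_cases hx : x ∈ Set.univ.pi (I r)
  · rw [Set.indicator_of_mem hx]
    simp only [localBasis, Set.indicator_of_mem (hx _ (Set.mem_univ _))]
  · obtain ⟨i, hxi⟩ : ∃ i, x i ∉ I r i := by simpa [Set.mem_univ_pi] using hx
    rw [Set.indicator_of_notMem hx]
    refine (Finset.sum_eq_zero fun α _ => ?_).symm
    rw [Finset.prod_eq_zero (Finset.mem_univ i) (Set.indicator_of_notMem hxi _), mul_zero]

/-- The conditional expectation `E[G | 𝔉_S]`: the factors outside `S` are replaced by their means
`δ_{a0} μᵢ(I r i)`, which kills every multi-index not vanishing off `S`. -/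
noncomputable def condMean (ν : Fin d → Measure ℝ) (I : Fin R → Fin d → Set ℝ)
    (𝒜 : Fin R → Finset (Fin d → ℕ)) (φ : Fin R → Fin d → ℕ → ℝ → ℝ)
    (y : Fin R → (Fin d → ℕ) → ℝ) (S : Finset (Fin d)) (x : Fin d → ℝ) : ℝ :=
  ∑ r, ∑ α ∈ (𝒜 r).filter (fun α => ∀ i ∉ S, α i = 0),
    y r α * (∏ i ∈ S, localBasis I φ r i (α i) (x i)) * ∏ i ∈ Sᶜ, (ν i (I r i)).toReal

variable {ν : Fin d → Measure ℝ} [∀ i, IsProbabilityMeasure (ν i)]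

theorem condExp_eq_condMean
    (hImeas : ∀ r i, MeasurableSet (I r i)) (hφmeas : ∀ r i a, Measurable (φ r i a))
    (hφ0 : ∀ r i, ∀ t ∈ I r i, φ r i 0 t = 1)
    (hφorth : ∀ r i a b, ∫ t in I r i, φ r i a t * φ r i b t ∂(ν i)
      = (if a = b then 1 else 0) * (ν i (I r i)).toReal)
    {G : (Fin d → ℝ) → ℝ}
    (hG : ∀ x, G x = ∑ r, Set.indicator (Set.univ.pi (I r))
      (fun x' => ∑ α ∈ 𝒜 r, y r α * ∏ i, φ r i (α i) (x' i)) x) (S : Finset (Fin d)) :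
    condMean ν I 𝒜 φ y S =ᵐ[Measure.pi ν] (Measure.pi ν)[G | coordSigma d S] := by
  have hψ r i a : Integrable (localBasis I φ r i a) (ν i) :=
    (memLp_two_localBasis hImeas hφmeas hφorth r i a).integrable one_le_two
  have hterm r α :
      Integrable (y r α • fun x : Fin d → ℝ => ∏ i, localBasis I φ r i (α i) (x i))
        (Measure.pi ν) :=
    (Integrable.fintype_prod_dep fun i => hψ r i (α i)).smul _
  have hGsum : G = ∑ r, ∑ α ∈ 𝒜 r,
      y r α • fun x : Fin d → ℝ => ∏ i, localBasis I φ r i (α i) (x i) := by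
    funext x
    simp only [Finset.sum_apply, Pi.smul_apply, smul_eq_mul]
    exact eq_sum_mul_prod_localBasis hG x
  rw [hGsum]
  symm
  refine (condExp_finsetSum
    (fun r _ => integrable_finsetSum' _ fun α _ => hterm r α) _).trans ?_
  refine (eventuallyEq_sum fun r _ =>
    (condExp_finsetSum (fun α _ => hterm r α) _).trans (eventuallyEq_sum fun α _ =>
      (condExp_smul (y r α) _ _).trans ((condExp_prod_apply S
        (fun i => measurable_localBasis hImeas hφmeas r i (α i)) fun i => hψ r i (α i)).const_smul
          (y r α)))).trans (Filter.EventuallyEq.of_eq ?_)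
  funext x
  simp only [condMean, Finset.sum_apply, Pi.smul_apply, smul_eq_mul, Finset.sum_filter,
    integral_localBasis hImeas hφ0 hφorth, Finset.prod_ite_zero, Finset.mem_compl]
  refine Finset.sum_congr rfl fun r _ => Finset.sum_congr rfl fun α _ => ?_
  split_ifs <;> ring

theorem memLp_two_condMean
    (hImeas : ∀ r i, MeasurableSet (I r i)) (hφmeas : ∀ r i a, Measurable (φ r i a))
    (hφorth : ∀ r i a b, ∫ t in I r i, φ r i a t * φ r i b t ∂(ν i)
      = (if a = b then 1 else 0) * (ν i (I r i)).toReal)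
    (S : Finset (Fin d)) :
    MemLp (condMean ν I 𝒜 φ y S) 2 (Measure.pi ν) :=
  memLp_finsetSum _ fun r _ => memLp_finsetSum _ fun α _ =>
    ((memLp_two_finset_prod_apply S fun i _ =>
      memLp_two_localBasis hImeas hφmeas hφorth r i (α i)).const_mul _).mul_const _

theorem integral_eq_sum_const_coeff_mul_measure
    (hImeas : ∀ r i, MeasurableSet (I r i)) (hφmeas : ∀ r i a, Measurable (φ r i a))
    (hφ0 : ∀ r i, ∀ t ∈ I r i, φ r i 0 t = 1)
    (hφorth : ∀ r i a b, ∫ t in I r i, φ r i a t * φ r i b t ∂(ν i)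
      = (if a = b then 1 else 0) * (ν i (I r i)).toReal)
    (hy0 : ∀ r, 0 ∉ 𝒜 r → y r 0 = 0) {G : (Fin d → ℝ) → ℝ}
    (hG : ∀ x, G x = ∑ r, Set.indicator (Set.univ.pi (I r))
      (fun x' => ∑ α ∈ 𝒜 r, y r α * ∏ i, φ r i (α i) (x' i)) x) :
    ∫ x, G x ∂Measure.pi ν = ∑ r, y r 0 * (Measure.pi ν (Set.univ.pi (I r))).toReal := by
  have hterm r α :
      Integrable (fun x : Fin d → ℝ => y r α * ∏ i, localBasis I φ r i (α i) (x i))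
        (Measure.pi ν) :=
    (Integrable.fintype_prod_dep fun i =>
      (memLp_two_localBasis hImeas hφmeas hφorth r i (α i)).integrable one_le_two).const_mul _
  have hzero (α : Fin d → ℕ) : (∀ i ∈ Finset.univ, α i = 0) ↔ α = 0 := by
    simp [funext_iff]
  simp_rw [eq_sum_mul_prod_localBasis hG]
  rw [integral_finsetSum _ fun r _ => integrable_finsetSum _ fun α _ => hterm r α]
  refine Finset.sum_congr rfl fun r _ => ?_
  rw [integral_finsetSum _ fun α _ => hterm r α]
  simp only [integral_const_mul, integral_fintype_prod_eq_prod,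
    integral_localBasis hImeas hφ0 hφorth, Finset.prod_ite_zero, hzero, mul_ite, mul_zero,
    Finset.sum_ite_eq']
  split_ifs with h0
  · rw [Measure.pi_pi, ENNReal.toReal_prod]
  · rw [hy0 r h0, zero_mul]

theorem integral_condMean_sq
    (hImeas : ∀ r i, MeasurableSet (I r i)) (hφmeas : ∀ r i a, Measurable (φ r i a))
    (hφorth : ∀ r i a b, ∫ t in I r i, φ r i a t * φ r i b t ∂(ν i)
      = (if a = b then 1 else 0) * (ν i (I r i)).toReal)
    (S : Finset (Fin d)) :
    ∫ x, condMean ν I 𝒜 φ y S x ^ 2 ∂Measure.pi ν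
      = ∑ r, ∑ r',
          (∑ α ∈ (𝒜 r).filter (fun α => ∀ i ∉ S, α i = 0),
            ∑ α' ∈ (𝒜 r').filter (fun α' => ∀ i ∉ S, α' i = 0),
              y r α * y r' α' *
                ∏ i ∈ S, ∫ t in I r i ∩ I r' i, φ r i (α i) t * φ r' i (α' i) t ∂(ν i))
          * (∏ i ∈ Sᶜ, (ν i (I r i)).toReal)
          * (∏ i ∈ Sᶜ, (ν i (I r' i)).toReal) := by
  have hterm r α :
      MemLp (fun x : Fin d → ℝ => y r α * (∏ i ∈ S, localBasis I φ r i (α i) (x i))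
        * ∏ i ∈ Sᶜ, (ν i (I r i)).toReal) 2 (Measure.pi ν) :=
    ((memLp_two_finset_prod_apply S fun i _ =>
      memLp_two_localBasis hImeas hφmeas hφorth r i (α i)).const_mul _).mul_const _
  simp only [sq, condMean]
  rw [integral_finset_sum_mul_finset_sum _ _
    (fun r _ => memLp_finsetSum _ fun α _ => hterm r α)
    (fun r _ => memLp_finsetSum _ fun α _ => hterm r α)]
  refine Finset.sum_congr rfl fun r _ => Finset.sum_congr rfl fun r' _ => ?_
  rw [integral_finset_sum_mul_finset_sum _ _ (fun α _ => hterm r α) (fun α _ => hterm r' α)]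
  simp only [Finset.sum_mul]
  refine Finset.sum_congr rfl fun α _ => Finset.sum_congr rfl fun α' _ => ?_
  have hprod (x : Fin d → ℝ) :
      y r α * (∏ i ∈ S, localBasis I φ r i (α i) (x i)) * (∏ i ∈ Sᶜ, (ν i (I r i)).toReal)
        * (y r' α' * (∏ i ∈ S, localBasis I φ r' i (α' i) (x i))
          * ∏ i ∈ Sᶜ, (ν i (I r' i)).toReal)
      = y r α * y r' α' * (∏ i ∈ Sᶜ, (ν i (I r i)).toReal)
          * (∏ i ∈ Sᶜ, (ν i (I r' i)).toReal)
        * ∏ i ∈ S, (localBasis I φ r i (α i) (x i) * localBasis I φ r' i (α' i) (x i)) := by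
    rw [Finset.prod_mul_distrib]; ring
  simp_rw [hprod]
  rw [integral_const_mul, integral_finset_prod_apply S
      fun i t => localBasis I φ r i (α i) t * localBasis I φ r' i (α' i) t]
  simp only [localBasis, integral_indicator_mul_indicator (hImeas r _) (hImeas r' _)]
  ring

end TreePCE

theorem tree_pce_sobol_formula_general
    (d R : ℕ)
    (ν : Fin d → Measure ℝ) [∀ i, IsProbabilityMeasure (ν i)]
    (I : Fin R → Fin d → Set ℝ) (hImeas : ∀ r i, MeasurableSet (I r i))
    (𝒜 : Fin R → Finset (Fin d → ℕ))
    (φ : Fin R → Fin d → ℕ → ℝ → ℝ)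
    (hφmeas : ∀ r i a, Measurable (φ r i a))
    (hφ0 : ∀ r i, ∀ t ∈ I r i, φ r i 0 t = 1)
    (hφorth : ∀ r i a b,
      ∫ t in I r i, φ r i a t * φ r i b t ∂(ν i)
        = (if a = b then 1 else 0) * (ν i (I r i)).toReal)
    (y : Fin R → (Fin d → ℕ) → ℝ)
    (hy0 : ∀ r, 0 ∉ 𝒜 r → y r 0 = 0)
    (G : (Fin d → ℝ) → ℝ)
    (hG : ∀ x, G x = ∑ r, Set.indicator (Set.univ.pi (I r))
      (fun x' => ∑ α ∈ 𝒜 r, y r α * ∏ i, φ r i (α i) (x' i)) x)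
    (J : Fin d → Fin R → Fin R → ℕ → ℕ → ℝ)
    (hJ : ∀ i r r' a a',
      J i r r' a a' = ∫ t in I r i ∩ I r' i, φ r i a t * φ r' i a' t ∂(ν i))
    (S : Finset (Fin d)) :
    variance ((Measure.pi ν)[G | coordSigma d S]) (Measure.pi ν)
      = (∑ r, ∑ r',
          (∑ α ∈ (𝒜 r).filter (fun α => ∀ i ∉ S, α i = 0),
            ∑ α' ∈ (𝒜 r').filter (fun α' => ∀ i ∉ S, α' i = 0),
              y r α * y r' α' * ∏ i ∈ S, J i r r' (α i) (α' i))
          * (∏ i ∈ Sᶜ, (ν i (I r i)).toReal)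
          * (∏ i ∈ Sᶜ, (ν i (I r' i)).toReal))
        - (∑ r, y r 0 * (Measure.pi ν (Set.univ.pi (I r))).toReal) ^ 2 := by
  have hcond := TreePCE.condExp_eq_condMean hImeas hφmeas hφ0 hφorth hG S
  have hmean :
      ∫ x, TreePCE.condMean ν I 𝒜 φ y S x ∂Measure.pi ν = ∫ x, G x ∂Measure.pi ν :=
    (integral_congr_ae hcond).trans (integral_condExp (coordSigma_le d S))
  rw [variance_congr hcond.symm,
    variance_eq_sub (TreePCE.memLp_two_condMean hImeas hφmeas hφorth S)]
  simp only [Pi.pow_apply]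
  rw [TreePCE.integral_condMean_sq hImeas hφmeas hφorth S, hmean,
    TreePCE.integral_eq_sum_const_coeff_mul_measure hImeas hφmeas hφ0 hφorth hy0 hG]
  simp_rw [hJ]

/-- Analytical Sobol' formula for the Tree-PCE metamodel. Under the
product probability measure `μ = μ₁ ⊗ ⋯ ⊗ μ_d`, the rectangles
`𝓡 r = ∏ i, I r i` partition the space up to null sets; the local bases are
tensorized, `Ψ r α (x) = ∏ i, φ r i (α i) (x i)`, with `φ r i 0 ≡ 1` on `I r i` and
`∫_{I r i} φ r i a · φ r i b dμ_i = δ_{ab} μ_i(I r i)`. With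
`G = Σ_r 1_{𝓡 r} Σ_{α ∈ 𝒜 r} y r α · Ψ r α`, `y r 0 = 0` when `0 ∉ 𝒜 r`, and
coupling terms `J i r r' a a' = ∫_{I r i ∩ I r' i} φ r i a · φ r' i a' dμ_i`, we have
`Var(E[G | 𝔉_S]) = Σ_{r,r'} (Σ_{α,α'; αᵢ = α'ᵢ = 0 ∀ i ∉ S} y r α · y r' α' ∏_{i ∈ S} J i r r' (α i) (α' i))
  · ∏_{i ∉ S} μ_i(I r i) · ∏_{i ∉ S} μ_i(I r' i) − (Σ_r y r 0 · μ(𝓡 r))²`. -/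
theorem tree_pce_sobol_formula
    (d R : ℕ)
    (ν : Fin d → Measure ℝ) [∀ i, IsProbabilityMeasure (ν i)]
    (I : Fin R → Fin d → Set ℝ) (hImeas : ∀ r i, MeasurableSet (I r i))
    (hdisj : ∀ r r', r ≠ r' →
      Measure.pi ν (Set.univ.pi (I r) ∩ Set.univ.pi (I r')) = 0)
    (hcover : Measure.pi ν (⋃ r, Set.univ.pi (I r)) = 1)
    (𝒜 : Fin R → Finset (Fin d → ℕ))
    (φ : Fin R → Fin d → ℕ → ℝ → ℝ)
    (hφmeas : ∀ r i a, Measurable (φ r i a))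
    (hφ0 : ∀ r i, ∀ t ∈ I r i, φ r i 0 t = 1)
    (hφorth : ∀ r i a b,
      ∫ t in I r i, φ r i a t * φ r i b t ∂(ν i)
        = (if a = b then 1 else 0) * (ν i (I r i)).toReal)
    (y : Fin R → (Fin d → ℕ) → ℝ)
    (hy0 : ∀ r, 0 ∉ 𝒜 r → y r 0 = 0)
    (G : (Fin d → ℝ) → ℝ)
    (hG : ∀ x, G x = ∑ r, Set.indicator (Set.univ.pi (I r))
      (fun x' => ∑ α ∈ 𝒜 r, y r α * ∏ i, φ r i (α i) (x' i)) x)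
    (J : Fin d → Fin R → Fin R → ℕ → ℕ → ℝ)
    (hJ : ∀ i r r' a a',
      J i r r' a a' = ∫ t in I r i ∩ I r' i, φ r i a t * φ r' i a' t ∂(ν i))
    (S : Finset (Fin d)) :
    variance ((Measure.pi ν)[G | coordSigma d S]) (Measure.pi ν)
      = (∑ r, ∑ r',
          (∑ α ∈ (𝒜 r).filter (fun α => ∀ i ∉ S, α i = 0),
            ∑ α' ∈ (𝒜 r').filter (fun α' => ∀ i ∉ S, α' i = 0),
              y r α * y r' α' * ∏ i ∈ S, J i r r' (α i) (α' i))
          * (∏ i ∈ Sᶜ, (ν i (I r i)).toReal)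
          * (∏ i ∈ Sᶜ, (ν i (I r' i)).toReal))
        - (∑ r, y r 0 * (Measure.pi ν (Set.univ.pi (I r))).toReal) ^ 2 :=
  tree_pce_sobol_formula_general d R ν I hImeas 𝒜 φ hφmeas hφ0 hφorth y hy0 G hG J hJ S
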